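/- arXiv:2311.01791 — 4 statements merged into one kernel-verified Lean document; each statement's English description precedes it below -/
import Mathlib

section
/- For every integer n ≥ 2 and every integer k with 2 ≤ k ≤ n, the element x̄_{n,k} lies in the kernel of the derivation D_n, i.e. D_n(x̄_{n,k}) = 0. -/
open MvPolynomial

noncomputable section

/-- `R n` is the polynomial ring `ℚ[x_{n,0}, …, x_{n,n}]`. -/
abbrev R (n : ℕ) : Type := MvPolynomial (Fin (n + 1)) ℚ

/-- The variable `x_{n,k}` of `R n` (and `0` for out-of-range indices, which never occur below). -/
def x (n k : ℕ) : R n := if h : k < n + 1 then X ⟨k, h⟩ else 0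

/-- The derivation `D_n = Σ_{k=0}^{n-1} x_{n,k} ∂/∂x_{n,k+1}`, i.e. the unique `ℚ`-linear
derivation with `D_n(x_{n,k}) = x_{n,k-1}` for `1 ≤ k ≤ n` and `D_n(x_{n,0}) = 0`. -/
def D (n : ℕ) : Derivation ℚ (R n) (R n) :=
  MvPolynomial.mkDerivation ℚ fun j : Fin (n + 1) =>
    if (j : ℕ) = 0 then 0 else x n ((j : ℕ) - 1)

/-- `x̄_{n,2ℓ} := x_{n,ℓ}² + 2 Σ_{i=0}^{ℓ−1} (−1)^{ℓ+i} x_{n,i} x_{n,2ℓ−i}`. -/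
def xbarE (n l : ℕ) : R n :=
  x n l ^ 2 + 2 * ∑ i ∈ Finset.range l, (-1 : R n) ^ (l + i) * x n i * x n (2 * l - i)

/-- `x̂_{n,2ℓ+1} := x_{n,ℓ}x_{n,ℓ+1} + Σ_{i=0}^{ℓ−1} (−1)^{ℓ+i}(2ℓ−2i+1) x_{n,i} x_{n,2ℓ+1−i}`. -/
def xhatO (n l : ℕ) : R n :=
  x n l * x n (l + 1) +
    ∑ i ∈ Finset.range l,
      (-1 : R n) ^ (l + i) * ((2 * l - 2 * i + 1 : ℕ) : R n) * x n i * x n (2 * l + 1 - i)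

/-- `x̄_{n,2ℓ+1} := x_{n,1}·x̄_{n,2ℓ} − x_{n,0}·x̂_{n,2ℓ+1}`. -/
def xbarO (n l : ℕ) : R n := x n 1 * xbarE n l - x n 0 * xhatO n l

/-- `x̄_{n,k}` for `k ≥ 2` (even or odd case). -/
def xbar (n k : ℕ) : R n := if k % 2 = 0 then xbarE n (k / 2) else xbarO n (k / 2)

-- auxiliary lemmas

lemma x_def (n k : ℕ) (h : k ≤ n) : x n k = X (⟨k, by omega⟩ : Fin (n+1)) := by
  simp [x, Nat.lt_succ_of_le h]

lemma D_x_zero (n : ℕ) : D n (x n 0) = 0 := by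
  rw [x_def n 0 (Nat.zero_le n), D, mkDerivation_X]; simp

lemma D_x (n k : ℕ) (h1 : 1 ≤ k) (h2 : k ≤ n) : D n (x n k) = x n (k-1) := by
  rw [x_def n k h2, D, mkDerivation_X]
  have : k ≠ 0 := by omega
  simp [this]

lemma D_neg_one_pow (n m : ℕ) : D n ((-1:R n)^m) = 0 := by
  rcases Nat.even_or_odd m with h|h
  · rw [h.neg_one_pow]; exact (D n).map_one_eq_zero
  · rw [h.neg_one_pow]; simp

lemma D_natCast (n c : ℕ) : D n ((c : R n)) = 0 := by
  have : ((c:ℕ) : R n) = algebraMap ℚ (R n) (c:ℚ) := by simp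
  rw [this, Derivation.map_algebraMap]

lemma D_const_mul (n : ℕ) (c p : R n) (hc : D n c = 0) : D n (c * p) = c * D n p := by
  rw [Derivation.leibniz, hc, smul_eq_mul, smul_eq_mul, mul_zero, add_zero]

lemma D_step (n e a b : ℕ) (ha : a+1 ≤ n) (hb : b+1 ≤ n) :
    D n ((-1:R n)^e * x n (a+1) * x n (b+1))
      = (-1:R n)^e * (x n a * x n (b+1) + x n (a+1) * x n b) := by
  rw [mul_assoc, D_const_mul _ _ _ (D_neg_one_pow n e), Derivation.leibniz,
      D_x n (a+1) (by omega) ha, D_x n (b+1) (by omega) hb, smul_eq_mul, smul_eq_mul]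
  simp only [Nat.add_sub_cancel]
  ring

lemma D_step0 (n e b : ℕ) (hb : b+1 ≤ n) :
    D n ((-1:R n)^e * x n 0 * x n (b+1)) = (-1:R n)^e * (x n 0 * x n b) := by
  rw [mul_assoc, D_const_mul _ _ _ (D_neg_one_pow n e), Derivation.leibniz,
      D_x n (b+1) (by omega) hb, D_x_zero, smul_eq_mul, smul_eq_mul]
  simp only [Nat.add_sub_cancel, smul_zero, mul_zero, add_zero]

lemma D_stepc (n e c a b : ℕ) (ha : a+1 ≤ n) (hb : b+1 ≤ n) :
    D n ((-1:R n)^e * (c : R n) * x n (a+1) * x n (b+1))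
      = (-1:R n)^e * (c : R n) * (x n a * x n (b+1) + x n (a+1) * x n b) := by
  have hc : D n ((-1:R n)^e * (c : R n)) = 0 := by
    rw [D_const_mul _ _ _ (D_neg_one_pow n e), D_natCast, mul_zero]
  rw [mul_assoc ((-1:R n)^e * (c:R n)), D_const_mul _ _ _ hc, Derivation.leibniz,
      D_x n (a+1) (by omega) ha, D_x n (b+1) (by omega) hb, smul_eq_mul, smul_eq_mul]
  simp only [Nat.add_sub_cancel]
  ring

lemma D_stepc0 (n e c b : ℕ) (hb : b+1 ≤ n) :
    D n ((-1:R n)^e * (c : R n) * x n 0 * x n (b+1))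
      = (-1:R n)^e * (c : R n) * (x n 0 * x n b) := by
  have hc : D n ((-1:R n)^e * (c : R n)) = 0 := by
    rw [D_const_mul _ _ _ (D_neg_one_pow n e), D_natCast, mul_zero]
  rw [mul_assoc ((-1:R n)^e * (c:R n)), D_const_mul _ _ _ hc, Derivation.leibniz,
      D_x n (b+1) (by omega) hb, D_x_zero, smul_eq_mul, smul_eq_mul]
  simp only [Nat.add_sub_cancel, smul_zero, mul_zero, add_zero]

lemma D_xbarE (n l : ℕ) (hl : 1 ≤ l) (h : 2*l ≤ n) : D n (xbarE n l) = 0 := by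
  obtain ⟨m, rfl⟩ : ∃ m, l = m + 1 := ⟨l - 1, by omega⟩
  set t : ℕ → R n := fun i => (-1:R n)^(m+1+i) * (x n i * x n (2*m+1-i)) with ht
  have hS : D n (∑ i ∈ Finset.range (m+1),
      (-1 : R n) ^ (m+1 + i) * x n i * x n (2 * (m+1) - i)) = t m := by
    rw [map_sum, Finset.sum_range_succ']
    have h0 : D n ((-1 : R n) ^ (m+1+0) * x n 0 * x n (2 * (m+1) - 0)) = t 0 := by
      have e1 : 2*(m+1) - 0 = (2*m+1)+1 := by omega
      have e2 : 2*m+1-0 = 2*m+1 := by omega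
      rw [e1, D_step0 n _ _ (by omega), ht]
      simp [e2]
    have h1 : ∑ i ∈ Finset.range m,
        D n ((-1 : R n) ^ (m+1+(i+1)) * x n (i+1) * x n (2 * (m+1) - (i+1)))
        = t m - t 0 := by
      rw [← Finset.sum_range_sub t m]
      apply Finset.sum_congr rfl
      intro i hi
      simp only [Finset.mem_range] at hi
      have e1 : 2*(m+1) - (i+1) = (2*m-i)+1 := by omega
      have e2 : 2*m+1-(i+1) = 2*m-i := by omega
      have e3 : 2*m+1-i = (2*m-i)+1 := by omega
      rw [e1, D_step n _ i (2*m-i) (by omega) (by omega), ht]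
      simp only [e2, e3]
      have e6 : m+1+(i+1) = (m+1+i)+1 := rfl
      rw [e6, pow_succ]
      ring
    rw [h0, h1]
    ring
  rw [xbarE, map_add, D_const_mul _ _ _ (by simpa using D_natCast n 2), hS,
      pow_two, Derivation.leibniz, D_x n (m+1) (by omega) (by omega),
      smul_eq_mul, ht]
  have e4 : 2*m+1-m = m+1 := by omega
  have e5 : (-1:R n)^(m+1+m) = -1 := Odd.neg_one_pow ⟨m, by ring⟩
  simp only [e4, e5, Nat.add_sub_cancel]
  ring

lemma D_xhatO (n l : ℕ) (hl : 1 ≤ l) (h : 2*l+1 ≤ n) : D n (xhatO n l) = xbarE n l := by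
  obtain ⟨m, rfl⟩ : ∃ m, l = m + 1 := ⟨l - 1, by omega⟩
  set v : ℕ → R n := fun i => (-1:R n)^(m+1+i) * x n i * x n (2*(m+1)-i) with hv
  set w : ℕ → R n := fun i =>
    (-1:R n)^(m+1+i) * ((2*(m+1)-2*i-1 : ℕ) : R n) * (x n i * x n (2*(m+1)-i)) with hw
  have hS : D n (∑ i ∈ Finset.range (m+1),
      (-1 : R n) ^ (m+1+i) * ((2*(m+1) - 2*i + 1 : ℕ) : R n) * x n i
        * x n (2*(m+1) + 1 - i)) = 2 * (∑ i ∈ Finset.range (m+1), v i) + w m := by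
    rw [map_sum, Finset.sum_range_succ']
    have h0 : D n ((-1 : R n) ^ (m+1+0) * ((2*(m+1) - 2*0 + 1 : ℕ) : R n) * x n 0
        * x n (2*(m+1) + 1 - 0)) = 2 * v 0 + w 0 := by
      have e1 : 2*(m+1)+1-0 = (2*(m+1))+1 := by omega
      rw [e1, D_stepc0 n _ _ _ (by omega), hv, hw]
      have e2 : (2*(m+1) - 2*0 + 1 : ℕ) = (2*(m+1)-2*0-1) + 2 := by omega
      have e3 : 2*(m+1)-0 = 2*(m+1) := by omega
      rw [e2, Nat.cast_add]
      simp only [e3]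
      push_cast
      ring
    have h1 : ∑ i ∈ Finset.range m,
        D n ((-1 : R n) ^ (m+1+(i+1)) * ((2*(m+1) - 2*(i+1) + 1 : ℕ) : R n) * x n (i+1)
          * x n (2*(m+1) + 1 - (i+1)))
        = (∑ i ∈ Finset.range m, 2 * v (i+1)) + (w m - w 0) := by
      rw [← Finset.sum_range_sub w m, ← Finset.sum_add_distrib]
      apply Finset.sum_congr rfl
      intro i hi
      simp only [Finset.mem_range] at hi
      have e1 : 2*(m+1)+1-(i+1) = (2*m+1-i)+1 := by omega
      rw [e1, D_stepc n _ _ i (2*m+1-i) (by omega) (by omega), hv, hw]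
      simp only
      have e2 : 2*(m+1)-(i+1) = 2*m+1-i := by omega
      have e3 : 2*(m+1)-2*(i+1)-1 = 2*m-2*i-1 := by omega
      have e4 : 2*(m+1)-i = (2*m+1-i)+1 := by omega
      have e5 : 2*(m+1)-2*i-1 = 2*m-2*i+1 := by omega
      have e6 : (2*(m+1) - 2*(i+1) + 1 : ℕ) = 2*m-2*i+1 := by omega
      have e7 : (2*m-2*i+1 : ℕ) = (2*m-2*i-1) + 2 := by omega
      rw [e2, e3, e4, e5, e6, e7, Nat.cast_add]
      have e8 : m+1+(i+1) = (m+1+i)+1 := rfl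
      rw [e8, pow_succ]
      push_cast
      ring
    rw [h0, h1, Finset.mul_sum, Finset.sum_range_succ' (fun i => 2 * v i) m]
    ring
  rw [xhatO, map_add, hS, Derivation.leibniz, D_x n (m+1) (by omega) (by omega),
      D_x n (m+1+1) (by omega) (by omega), smul_eq_mul, smul_eq_mul, hw, xbarE]
  simp only [Nat.add_sub_cancel]
  have e9 : 2*(m+1)-2*m-1 = 1 := by omega
  have e10 : 2*(m+1)-m = m+2 := by omega
  have e11 : (-1:R n)^(m+1+m) = -1 := Odd.neg_one_pow ⟨m, by ring⟩
  simp only [e9, e10, e11, Nat.cast_one]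
  rw [pow_two]
  ring

lemma D_xbarO (n l : ℕ) (hl : 1 ≤ l) (h : 2*l+1 ≤ n) : D n (xbarO n l) = 0 := by
  rw [xbarO, map_sub, Derivation.leibniz, Derivation.leibniz,
      D_x n 1 le_rfl (by omega), D_x_zero, D_xbarE n l hl (by omega),
      D_xhatO n l hl h, smul_eq_mul, smul_eq_mul, smul_eq_mul, smul_zero]
  ring


/-- For every integer `n ≥ 2` and every `2 ≤ k ≤ n`, `D_n(x̄_{n,k}) = 0`. -/
theorem statement0 (n : ℕ) (hn : 2 ≤ n) (k : ℕ) (hk2 : 2 ≤ k) (hkn : k ≤ n) :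
    D n (xbar n k) = 0 := by
  rw [xbar]
  by_cases h : k % 2 = 0
  · rw [if_pos h]
    exact D_xbarE n (k/2) (by omega) (by omega)
  · rw [if_neg h]
    exact D_xbarO n (k/2) (by omega) (by omega)


end
end

section
/- For every integer n ≥ 2, the n elements x_{n,0}, x̄_{n,2}, x̄_{n,3}, …, x̄_{n,n} of R_n are algebraically independent over ℚ. -/
open MvPolynomial

noncomputable section

/-! Write `x̄_k(v)` for the same polynomial expressions evaluated at a sequence `v`. For `ℓ ≥ 1`,
`x̄_{2ℓ}` is affine in `x_{2ℓ}` with coefficient `2(-1)^ℓ x_0`, all other variables having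
smaller index; and once `x_1 = 0`, `x̄_{2ℓ+1} = -x_0 x̂_{2ℓ+1}` is affine in `x_{2ℓ+1}` with
coefficient `-(-1)^ℓ (2ℓ+1) x_0²`. So in the field `K = ℚ(t_0, t_1, …)` one can solve recursively
for `u_0 = t_0`, `u_1 = 0`, `u_2, u_3, …` with `x̄_k(u) = t_{k-1}`. Substituting `x_k ↦ u_k` maps
`x_0, x̄_2, …, x̄_n` to the independent `t_0, …, t_{n-1}`, hence they are independent. -/

section Sequences

variable {A : Type*} [CommRing A]

def xbarEOf (v : ℕ → A) (l : ℕ) : A :=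
  v l ^ 2 + 2 * ∑ i ∈ Finset.range l, (-1 : A) ^ (l + i) * v i * v (2 * l - i)

def xhatOOf (v : ℕ → A) (l : ℕ) : A :=
  v l * v (l + 1) +
    ∑ i ∈ Finset.range l,
      (-1 : A) ^ (l + i) * ((2 * l - 2 * i + 1 : ℕ) : A) * v i * v (2 * l + 1 - i)

def xbarOOf (v : ℕ → A) (l : ℕ) : A := v 1 * xbarEOf v l - v 0 * xhatOOf v l

def xbarOf (v : ℕ → A) (k : ℕ) : A :=
  if k % 2 = 0 then xbarEOf v (k / 2) else xbarOOf v (k / 2)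

theorem xbar_eq_xbarOf (n k : ℕ) : xbar n k = xbarOf (x n) k := rfl

theorem map_xbarOf {B : Type*} [CommRing B] (f : A →+* B) (v : ℕ → A) (k : ℕ) :
    f (xbarOf v k) = xbarOf (f ∘ v) k := by
  simp only [xbarOf, xbarOOf, xbarEOf, xhatOOf, apply_ite f, map_sub, map_add, map_mul, map_pow,
    map_sum, map_neg, map_one, map_ofNat, map_natCast, Function.comp_apply]

theorem xbarEOf_congr {v w : ℕ → A} {l : ℕ} (h : ∀ j ≤ 2 * l, v j = w j) :
    xbarEOf v l = xbarEOf w l := by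
  unfold xbarEOf
  rw [h l (by omega)]
  congr 2
  refine Finset.sum_congr rfl fun i hi => ?_
  have := Finset.mem_range.mp hi
  rw [h i (by omega), h (2 * l - i) (by omega)]

theorem xhatOOf_congr {v w : ℕ → A} {l : ℕ} (h : ∀ j ≤ 2 * l + 1, v j = w j) :
    xhatOOf v l = xhatOOf w l := by
  unfold xhatOOf
  rw [h l (by omega), h (l + 1) (by omega)]
  refine congrArg _ (Finset.sum_congr rfl fun i hi => ?_)
  have := Finset.mem_range.mp hi
  rw [h i (by omega), h (2 * l + 1 - i) (by omega)]

theorem xbarOf_congr {v w : ℕ → A} {k : ℕ} (h : ∀ j ≤ k, v j = w j) :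
    xbarOf v k = xbarOf w k := by
  unfold xbarOf xbarOOf
  split_ifs
  · exact xbarEOf_congr fun j hj => h j (by omega)
  · rw [h 0 (by omega), h 1 (by omega), xbarEOf_congr fun j hj => h j (by omega),
      xhatOOf_congr fun j hj => h j (by omega)]

def truncBelow (v : ℕ → A) (k : ℕ) : ℕ → A := fun j => if j < k then v j else 0

theorem xbarEOf_eq_truncBelow_add {v : ℕ → A} {l : ℕ} (hl : 0 < l) :
    xbarEOf v l = xbarEOf (truncBelow v (2 * l)) l + 2 * (-1) ^ l * v 0 * v (2 * l) := by
  have hlow : ∀ i ∈ Finset.Ico 1 l, (-1 : A) ^ (l + i) * truncBelow v (2 * l) i *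
      truncBelow v (2 * l) (2 * l - i) = (-1) ^ (l + i) * v i * v (2 * l - i) := fun i hi => by
    simp only [Finset.mem_Ico] at hi
    simp only [truncBelow, if_pos (show i < 2 * l by omega),
      if_pos (show 2 * l - i < 2 * l by omega)]
  simp only [xbarEOf, Finset.range_eq_Ico, Finset.sum_eq_sum_Ico_succ_bot hl,
    Finset.sum_congr rfl hlow]
  simp only [truncBelow, if_pos (show l < 2 * l by omega), if_pos (show 0 < 2 * l by omega),
    lt_irrefl, if_false, Nat.sub_zero, Nat.add_zero]
  ring

theorem xhatOOf_eq_truncBelow_add {v : ℕ → A} {l : ℕ} (hl : 0 < l) :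
    xhatOOf v l = xhatOOf (truncBelow v (2 * l + 1)) l +
      (-1) ^ l * (2 * l + 1) * v 0 * v (2 * l + 1) := by
  have hlow : ∀ i ∈ Finset.Ico 1 l, (-1 : A) ^ (l + i) * ((2 * l - 2 * i + 1 : ℕ) : A) *
      truncBelow v (2 * l + 1) i * truncBelow v (2 * l + 1) (2 * l + 1 - i) =
      (-1) ^ (l + i) * ((2 * l - 2 * i + 1 : ℕ) : A) * v i * v (2 * l + 1 - i) := fun i hi => by
    simp only [Finset.mem_Ico] at hi
    simp only [truncBelow, if_pos (show i < 2 * l + 1 by omega),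
      if_pos (show 2 * l + 1 - i < 2 * l + 1 by omega)]
  simp only [xhatOOf, Finset.range_eq_Ico, Finset.sum_eq_sum_Ico_succ_bot hl,
    Finset.sum_congr rfl hlow]
  simp only [truncBelow, if_pos (show l < 2 * l + 1 by omega),
    if_pos (show l + 1 < 2 * l + 1 by omega), if_pos (show 0 < 2 * l + 1 by omega), lt_irrefl,
    if_false, Nat.sub_zero, Nat.add_zero, Nat.mul_zero]
  push_cast
  ring

end Sequences

section Solution

variable {L : Type*} [Field L] (c : L) (t : ℕ → L)

def solSeq (k : ℕ) : L :=
  if k = 0 then c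
  else if k = 1 then 0
  else
    -- `w` is `truncBelow solSeq k`, written out so that the recursion is visibly well-founded
    let w : ℕ → L := fun j => if _ : j < k then solSeq j else 0
    if k % 2 = 0 then (-1) ^ (k / 2) * (t (k - 1) - xbarEOf w (k / 2)) / (2 * c)
    else (-1) ^ (k / 2 + 1) * (t (k - 1) + c * xhatOOf w (k / 2)) / (k * c ^ 2)
termination_by k

theorem solSeq_zero : solSeq c t 0 = c := by
  rw [solSeq, if_pos rfl]

theorem solSeq_one : solSeq c t 1 = 0 := by
  rw [solSeq, if_neg one_ne_zero, if_pos rfl]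

theorem solSeq_even {l : ℕ} (hl : 0 < l) :
    solSeq c t (2 * l) =
      (-1) ^ l * (t (2 * l - 1) - xbarEOf (truncBelow (solSeq c t) (2 * l)) l) / (2 * c) := by
  rw [solSeq, if_neg (by omega), if_neg (by omega), if_pos (by omega),
    Nat.mul_div_cancel_left l two_pos]
  simp only [dite_eq_ite]
  rfl

theorem solSeq_odd {l : ℕ} (hl : 0 < l) :
    solSeq c t (2 * l + 1) =
      (-1) ^ (l + 1) * (t (2 * l) + c * xhatOOf (truncBelow (solSeq c t) (2 * l + 1)) l) /
        ((2 * l + 1) * c ^ 2) := by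
  rw [solSeq, if_neg (by omega), if_neg (by omega), if_neg (by omega),
    show (2 * l + 1) / 2 = l by omega, Nat.add_sub_cancel]
  simp only [dite_eq_ite]
  push_cast
  rfl

theorem xbarOf_solSeq [CharZero L] (hc : c ≠ 0) {k : ℕ} (hk : 2 ≤ k) :
    xbarOf (solSeq c t) k = t (k - 1) := by
  have hsq (l : ℕ) : ((-1 : L) ^ l) ^ 2 = 1 := by rw [← pow_mul, pow_mul', neg_one_sq, one_pow]
  obtain ⟨l, rfl | rfl⟩ := Nat.even_or_odd' k
  · have hl : 0 < l := by omega
    rw [xbarOf, if_pos (by omega), Nat.mul_div_cancel_left l two_pos,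
      xbarEOf_eq_truncBelow_add hl, solSeq_even c t hl, solSeq_zero]
    field_simp
    linear_combination (t (2 * l - 1) - xbarEOf (truncBelow (solSeq c t) (2 * l)) l) * hsq l
  · have hl : 0 < l := by omega
    have hm : (2 * l + 1 : L) ≠ 0 := by exact_mod_cast (2 * l).succ_ne_zero
    rw [xbarOf, if_neg (by omega), show (2 * l + 1) / 2 = l by omega, xbarOOf,
      xhatOOf_eq_truncBelow_add hl, solSeq_odd c t hl, solSeq_zero, solSeq_one, Nat.add_sub_cancel]
    field_simp
    linear_combination (t (2 * l) + c * xhatOOf (truncBelow (solSeq c t) (2 * l + 1)) l) * hsq l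

end Solution

theorem aeval_x {A : Type*} [CommSemiring A] [Algebra ℚ A] (v : ℕ → A) {n k : ℕ} (hk : k ≤ n) :
    aeval (fun j : Fin (n + 1) => v j) (x n k) = v k := by
  simp [x, Nat.lt_succ_of_le hk]

theorem aeval_xbar {A : Type*} [CommRing A] [Algebra ℚ A] (v : ℕ → A) {n k : ℕ} (hk : k ≤ n) :
    aeval (fun j : Fin (n + 1) => v j) (xbar n k) = xbarOf v k := by
  rw [xbar_eq_xbarOf, ← AlgHom.coe_toRingHom, map_xbarOf]
  exact xbarOf_congr fun j hj => aeval_x v (hj.trans hk)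

theorem statement2_general (n : ℕ) :
    AlgebraicIndependent ℚ
      (fun i : Fin n => if (i : ℕ) = 0 then x n 0 else xbar n ((i : ℕ) + 1)) := by
  let K := FractionRing (MvPolynomial ℕ ℚ)
  let t : ℕ → K := fun j => algebraMap (MvPolynomial ℕ ℚ) K (X j)
  have ht : AlgebraicIndependent ℚ t :=
    (algebraicIndependent_X ℕ ℚ).map' (f := IsScalarTower.toAlgHom ℚ _ K)
      (IsFractionRing.injective _ K)
  have ht0 : t 0 ≠ 0 := ht.ne_zero 0
  refine AlgebraicIndependent.of_comp (aeval fun j : Fin (n + 1) => solSeq (t 0) t j) ?_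
  convert ht.comp _ Fin.val_injective using 1
  funext i
  simp only [Function.comp_apply]
  split_ifs with hi
  · rw [aeval_x _ (Nat.zero_le n), solSeq_zero, hi]
  · rw [aeval_xbar _ (by omega), xbarOf_solSeq _ _ ht0 (by omega), Nat.add_sub_cancel]

/-- For every `n ≥ 2`, the `n` elements `x_{n,0}, x̄_{n,2}, x̄_{n,3}, …, x̄_{n,n}` of `R_n`
are algebraically independent over `ℚ`. -/
theorem statement2 (n : ℕ) (hn : 2 ≤ n) :
    AlgebraicIndependent ℚ
      (fun i : Fin n => if (i : ℕ) = 0 then x n 0 else xbar n ((i : ℕ) + 1)) :=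
  statement2_general n

end
end

section
/- For every f ∈ R_∞ there exist g ∈ R_∞ and a monomial M in the variables {x_{n,0} : n ≥ 2} such that D_∞(g) = M·f. (Equivalently, the canonical extension D'_∞ of D_∞ to the localization of R_∞ at the multiplicative set generated by all x_{n,0} is surjective, i.e. Coker(D'_∞) = 0; in particular, for every d ≥ 1 the S-module R_∞^{(d−1)}/D_∞(R_∞^{(d)}) is a torsion S-module.) -/
open MvPolynomial

noncomputable section

/-- The index set `{(n,k) : 2 ≤ n, 0 ≤ k ≤ n}` of the variables `x_{n,k}` of `R_∞`. -/
abbrev Idx : Type := {p : ℕ × ℕ // 2 ≤ p.1 ∧ p.2 ≤ p.1}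

/-- The polynomial ring `R_∞ = ℚ[x_{n,k} : n ≥ 2, 0 ≤ k ≤ n]`. -/
abbrev Rinf : Type := MvPolynomial Idx ℚ

/-- The variable `x_{n,k}` (and `0` for out-of-range indices, which never occur below). -/
def xv (n k : ℕ) : Rinf := if h : 2 ≤ n ∧ k ≤ n then X ⟨(n, k), h⟩ else 0

/-- The derivation `D_∞` with `D_∞(x_{n,k}) = x_{n,k−1}` for `1 ≤ k ≤ n` and
`D_∞(x_{n,0}) = 0`. -/
def Dinf : Derivation ℚ Rinf Rinf :=
  MvPolynomial.mkDerivation ℚ fun s : Idx =>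
    if s.1.2 = 0 then 0 else xv s.1.1 (s.1.2 - 1)

/-- The weight `wt(x_{n,k}) = k`. -/
def wt : Idx → ℕ := fun s => s.1.2

/-- `R_∞^{(d)}`: the `ℚ`-span of the monomials of weight `d`. -/
def W (d : ℕ) : Submodule ℚ Rinf := weightedHomogeneousSubmodule ℚ wt d

/- ### Auxiliary lemmas -/

lemma D_X (s : Idx) : Dinf (X s) = if s.1.2 = 0 then 0 else xv s.1.1 (s.1.2 - 1) :=
  mkDerivation_X _ _ _

lemma D_a : Dinf (xv 2 0) = 0 := by
  rw [xv, dif_pos (by norm_num)]; rw [D_X]; simp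

lemma D_s : Dinf (xv 2 1) = xv 2 0 := by
  rw [xv, dif_pos (by norm_num)]; rw [D_X]; simp

lemma iter_zero (j : ℕ) : Dinf^[j] 0 = 0 := by
  induction j with
  | zero => rfl
  | succ n ih => rw [Function.iterate_succ_apply, map_zero, ih]

lemma iter_eventually (p : Rinf) (m : ℕ) (hp : Dinf^[m] p = 0) (i : ℕ) (hi : m ≤ i) :
    Dinf^[i] p = 0 := by
  obtain ⟨j, rfl⟩ := Nat.exists_eq_add_of_le hi
  rw [Nat.add_comm, Function.iterate_add_apply, hp, iter_zero]

lemma iter_mul_mem (p q : Rinf) (k : ℕ) :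
    Dinf^[k] (p * q) ∈ Submodule.span ℚ
      {r : Rinf | ∃ i j, i + j = k ∧ r = Dinf^[i] p * Dinf^[j] q} := by
  induction k with
  | zero => exact Submodule.subset_span ⟨0, 0, rfl, rfl⟩
  | succ k ih =>
    rw [Function.iterate_succ_apply']
    refine Submodule.span_induction
      (p := fun r _ => Dinf r ∈ Submodule.span ℚ
        {r : Rinf | ∃ i j, i + j = k + 1 ∧ r = Dinf^[i] p * Dinf^[j] q})
      (fun r hr => ?_) (by simp only [map_zero]; exact Submodule.zero_mem _)
      (fun x y _ _ hx hy => by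
        show Dinf (x + y) ∈ _; rw [map_add]; exact Submodule.add_mem _ hx hy)
      (fun c x _ hx => by
        show Dinf (c • x) ∈ _; rw [Derivation.map_smul]
        exact Submodule.smul_mem _ _ hx) ih
    obtain ⟨i, j, hij, rfl⟩ := hr
    rw [Derivation.leibniz, smul_eq_mul, smul_eq_mul]
    refine Submodule.add_mem _
      (Submodule.subset_span ⟨i, j + 1, by omega, by
        rw [Function.iterate_succ_apply']⟩)
      (Submodule.subset_span ⟨i + 1, j, by omega, by
        rw [Function.iterate_succ_apply']; ring⟩)

lemma nilp_mul (p q : Rinf) (m n : ℕ) (hp : Dinf^[m] p = 0) (hq : Dinf^[n] q = 0) :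
    Dinf^[m + n] (p * q) = 0 := by
  have h := iter_mul_mem p q (m + n)
  have hsub : {r : Rinf | ∃ i j, i + j = m + n ∧ r = Dinf^[i] p * Dinf^[j] q} ⊆ {0} := by
    rintro r ⟨i, j, hij, rfl⟩
    rcases le_or_gt m i with hi | hi
    · rw [iter_eventually p m hp i hi, zero_mul]; rfl
    · rw [iter_eventually q n hq j (by omega), mul_zero]; rfl
  have := Submodule.span_mono (R := ℚ) hsub h
  simpa using this

lemma iter_X_zero (s : Idx) : Dinf^[s.1.2 + 1] (X s) = 0 := by
  obtain ⟨⟨n, k⟩, h⟩ := s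
  induction k with
  | zero => simp [Function.iterate_succ_apply, D_X]
  | succ k ih =>
    rw [Function.iterate_succ_apply, D_X]
    simp only [Nat.succ_ne_zero, if_false, Nat.add_sub_cancel]
    have hk : 2 ≤ n ∧ k ≤ n := ⟨h.1, le_trans (Nat.le_succ k) h.2⟩
    rw [xv, dif_pos hk]
    exact ih hk

/-- `D_∞` is locally nilpotent. -/
lemma nilp (f : Rinf) : ∃ N, Dinf^[N] f = 0 := by
  induction f using MvPolynomial.induction_on with
  | C q =>
    refine ⟨1, ?_⟩
    rw [Function.iterate_one]
    have : (C q : Rinf) = algebraMap ℚ Rinf q := rfl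
    rw [this, Derivation.map_algebraMap]
  | add p q hp hq =>
    obtain ⟨m, hm⟩ := hp
    obtain ⟨n, hn⟩ := hq
    refine ⟨m + n, ?_⟩
    have hadd : ∀ (k : ℕ) (x y : Rinf), Dinf^[k] (x + y) = Dinf^[k] x + Dinf^[k] y := by
      intro k
      induction k with
      | zero => intro x y; rfl
      | succ k ih =>
        intro x y
        rw [Function.iterate_succ_apply, map_add, ih, ← Function.iterate_succ_apply,
          ← Function.iterate_succ_apply]
    rw [hadd, iter_eventually p m hm _ (by omega), iter_eventually q n hn _ (by omega),
      add_zero]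
  | mul_X p s hp =>
    obtain ⟨m, hm⟩ := hp
    exact ⟨m + (s.1.2 + 1), nilp_mul p (X s) m (s.1.2 + 1) hm (iter_X_zero s)⟩

/-- For every `f ∈ R_∞` there exist `g ∈ R_∞` and a monomial `M` in the variables
`{x_{n,0} : n ≥ 2}` such that `D_∞(g) = M·f`. -/
theorem statement7 (f : Rinf) :
    ∃ (g : Rinf) (m : Idx →₀ ℕ), (∀ s ∈ m.support, s.1.2 = 0) ∧
      Dinf g = (monomial m (1 : ℚ)) * f := by
  obtain ⟨N, hN⟩ := nilp f
  set s : Rinf := xv 2 1 with hs_def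
  set a : Rinf := xv 2 0 with ha_def
  set v : ℕ → Rinf := fun i => ((-1 : ℚ)^i / i.factorial) • (s^i * a^(N-i) * Dinf^[i] f)
    with hv_def
  refine ⟨∑ i ∈ Finset.range N,
      ((-1 : ℚ)^i / (i+1).factorial) • (s^(i+1) * a^(N-1-i) * Dinf^[i] f),
    Finsupp.single ⟨(2,0), by norm_num⟩ N, ?_, ?_⟩
  · intro t ht
    have := Finsupp.support_single_subset ht
    rw [Finset.mem_singleton] at this; subst this; rfl
  · rw [← X_pow_eq_monomial]
    have hXa : (X (⟨(2,0), by norm_num⟩ : Idx) : Rinf) = a := by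
      rw [ha_def, xv, dif_pos (by norm_num)]
    rw [hXa, map_sum]
    have key : ∀ i ∈ Finset.range N,
        Dinf (((-1 : ℚ)^i / (i+1).factorial) • (s^(i+1) * a^(N-1-i) * Dinf^[i] f))
          = v i - v (i+1) := by
      intro i hi
      have hiN : i < N := Finset.mem_range.mp hi
      have hpow : a^(N-1-i) * a = a^(N-i) := by
        rw [← pow_succ]; congr 1; omega
      have hDT : Dinf (s^(i+1) * a^(N-1-i) * Dinf^[i] f)
          = s^(i+1) * a^(N-1-i) * Dinf^[i+1] f
            + (i+1) • (s^i * a^(N-i) * Dinf^[i] f) := by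
        rw [Derivation.leibniz, Derivation.leibniz, Derivation.leibniz_pow,
          Derivation.leibniz_pow, D_a, D_s]
        rw [Function.iterate_succ_apply' (f := (Dinf : Rinf → Rinf)) i f]
        simp only [smul_eq_mul, mul_zero, zero_mul, add_zero, zero_add, nsmul_eq_mul,
          Nat.add_sub_cancel]
        rw [← hpow]
        ring
      rw [Derivation.map_smul, hDT, smul_add, ← Nat.cast_smul_eq_nsmul ℚ, smul_smul]
      have hfact : (((i+1).factorial : ℚ)) = ((i:ℚ)+1) * (i.factorial : ℚ) := by
        rw [Nat.factorial_succ]; push_cast; ring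
      have hi0 : ((i.factorial : ℚ)) ≠ 0 := Nat.cast_ne_zero.mpr (Nat.factorial_ne_zero i)
      have hi1 : ((i:ℚ)+1) ≠ 0 := by positivity
      have hc1 : ((-1 : ℚ)^i / (i+1).factorial) * (((i+1 : ℕ) : ℚ)) = (-1 : ℚ)^i / i.factorial := by
        rw [hfact]; push_cast; field_simp
      have hc2 : ((-1 : ℚ)^i / (i+1).factorial) = -((-1 : ℚ)^(i+1) / (i+1).factorial) := by
        rw [pow_succ]; field_simp
      have hsub2 : N - (i+1) = N - 1 - i := by omega
      rw [hc1, hc2, hv_def]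
      simp only []
      rw [hsub2, neg_smul]
      abel
    rw [Finset.sum_congr rfl key, Finset.sum_range_sub']
    have hv0 : v 0 = a ^ N * f := by
      simp [hv_def]
    have hvN : v N = 0 := by
      simp [hv_def, hN]
    rw [hv0, hvN, sub_zero]

end
end

section
/- Let a, b, p, q ≥ 0 be integers with a+p ≥ 2 and b+q ≥ 2, and let 0 ≤ k ≤ min(a,q). Then the element x_{a+p,p}·x_{b+q,q} − (−1)^k · x_{a+p,p+k}·x_{b+q,q−k} of R_∞ lies in D_∞(V), where V ⊆ R_∞^{(p+q+1)} is the ℚ-linear span of all products x_{m,i}·x_{m',j} of two variables with i + j = p + q + 1. (In the paper's notation: m̄_{a,p}·m̄_{b,q} = (−1)^k·m̄_{a−k,p+k}·m̄_{b+k,q−k} in Coker(𝐃_{d,1}).) -/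
open MvPolynomial

noncomputable section

lemma Dxv (n m : ℕ) (h2 : 2 ≤ n) (hm : m + 1 ≤ n) : Dinf (xv n (m + 1)) = xv n m := by
  rw [xv, dif_pos ⟨h2, hm⟩, Dinf, MvPolynomial.mkDerivation_X]
  simp

/-- For `a,b,p,q ≥ 0` with `a+p ≥ 2`, `b+q ≥ 2` and `0 ≤ k ≤ min(a,q)`, the element
`x_{a+p,p}·x_{b+q,q} − (−1)^k·x_{a+p,p+k}·x_{b+q,q−k}` lies in `D_∞(V)`, where `V` is the
`ℚ`-span of the products of two variables `x_{m,i}·x_{m',j}` with `i+j = p+q+1`. -/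
theorem statement8 (a b p q k : ℕ) (hap : 2 ≤ a + p) (hbq : 2 ≤ b + q)
    (hka : k ≤ a) (hkq : k ≤ q) :
    xv (a + p) p * xv (b + q) q - (-1 : Rinf) ^ k * (xv (a + p) (p + k) * xv (b + q) (q - k)) ∈
      Submodule.map Dinf.toLinearMap
        (Submodule.span ℚ
          {f : Rinf | ∃ m i m' j, i + j = p + q + 1 ∧ f = xv m i * xv m' j}) := by
  induction k with
  | zero => simp
  | succ k ih =>
    have hka' : k ≤ a := Nat.le_of_succ_le hka
    have hkq' : k ≤ q := Nat.le_of_succ_le hkq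
    have ih' := ih hka' hkq'
    set S := {f : Rinf | ∃ m i m' j, i + j = p + q + 1 ∧ f = xv m i * xv m' j} with hS
    -- the element v = x_{a+p, p+k+1} * x_{b+q, q-k}
    have hv : (xv (a + p) (p + k + 1) * xv (b + q) (q - k)) ∈ S := by
      refine ⟨a + p, p + k + 1, b + q, q - k, ?_, rfl⟩
      omega
    have hDv : Dinf (xv (a + p) (p + k + 1) * xv (b + q) (q - k)) =
        xv (a + p) (p + k) * xv (b + q) (q - k) +
          xv (a + p) (p + k + 1) * xv (b + q) (q - (k + 1)) := by
      have h1 : Dinf (xv (a + p) (p + k + 1)) = xv (a + p) (p + k) :=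
        Dxv _ _ hap (by omega)
      have h2 : Dinf (xv (b + q) (q - k)) = xv (b + q) (q - (k + 1)) := by
        have : q - k = (q - (k + 1)) + 1 := by omega
        rw [this, Dxv _ _ hbq (by omega)]
      rw [Derivation.leibniz, h1, h2, smul_eq_mul, smul_eq_mul]
      ring
    have hmem : Dinf (xv (a + p) (p + k + 1) * xv (b + q) (q - k)) ∈
        Submodule.map Dinf.toLinearMap (Submodule.span ℚ S) :=
      ⟨_, Submodule.subset_span hv, rfl⟩
    have key : xv (a + p) p * xv (b + q) q -
        (-1 : Rinf) ^ (k + 1) * (xv (a + p) (p + (k + 1)) * xv (b + q) (q - (k + 1))) =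
        (xv (a + p) p * xv (b + q) q -
          (-1 : Rinf) ^ k * (xv (a + p) (p + k) * xv (b + q) (q - k))) +
        ((-1 : ℚ) ^ k) • Dinf (xv (a + p) (p + k + 1) * xv (b + q) (q - k)) := by
      rw [hDv, MvPolynomial.smul_eq_C_mul, map_pow, map_neg, map_one]
      have : p + (k + 1) = p + k + 1 := by omega
      rw [this]
      ring
    rw [key]
    exact Submodule.add_mem _ ih' (Submodule.smul_mem _ _ hmem)

end
end
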